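/- Define Ĵ(z) = √( (1/(1 + √π z e^{z²} erfc(−z))) · (1/(1 + √π z e^{z²} erfc(−z)) + 2) ) for z ∈ ℝ. Then Ĵ(z) > 0 for all z, Ĵ is strictly decreasing, Ĵ(z) ~ 2z² as z → −∞, and Ĵ(z) ~ 1/√(√π z e^{z²}) as z → ∞. -/

import Mathlib

open Filter

noncomputable def erfc (x : ℝ) : ℝ :=
  (2 / Real.sqrt Real.pi) * ∫ u in Set.Ioi x, Real.exp (-u^2)

noncomputable def Jhat (z : ℝ) : ℝ :=
  Real.sqrt ((1 / (1 + Real.sqrt Real.pi * z * Real.exp (z^2) * erfc (-z)))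
    * (1 / (1 + Real.sqrt Real.pi * z * Real.exp (z^2) * erfc (-z)) + 2))

/-!
Write `D z = 1 + √π z e^{z²} erfc(-z)`, so that `Ĵ = √(u (u + 2))` with `u = 1 / D`. Shifting the
Gaussian integrals gives `D z = ∫₀^∞ 2v e^{2zv - v²} dv`, whose integrand is positive and strictly
increasing in `z`; hence `D > 0` is strictly increasing and `Ĵ` is positive and strictly decreasing.
For `z < 0` the substitution `t = -2zv` gives `2z² D z = ∫₀^∞ t e^{-t} e^{-t²/(4z²)} dt → Γ(2) = 1`
by dominated convergence, so `u ~ 2z²` and `Ĵ ~ u`. As `z → ∞`, `erfc(-z) → 2`, so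
`D ~ 2√π z e^{z²}`, `u → 0` and `Ĵ² ~ 2u ~ 1/(√π z e^{z²})`.
-/

open Real MeasureTheory Set Topology

theorem setIntegral_pos_of_forall_pos {X : Type*} [MeasurableSpace X] {μ : Measure X}
    {s : Set X} {f : X → ℝ} (hs : MeasurableSet s) (hμs : μ s ≠ 0) (hf : ∀ x ∈ s, 0 < f x)
    (hfi : IntegrableOn f s μ) : 0 < ∫ x in s, f x ∂μ := by
  rw [setIntegral_pos_iff_support_of_nonneg_ae
      (ae_restrict_of_forall_mem hs fun x hx => (hf x hx).le) hfi,
    inter_eq_right.2 fun x hx => (Function.mem_support.2 (hf x hx).ne'), pos_iff_ne_zero]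
  exact hμs

theorem integral_Ioi_comp_sub_right {E : Type*} [NormedAddCommGroup E] [NormedSpace ℝ E]
    (f : ℝ → E) (a c : ℝ) :
    ∫ x in Ioi a, f (x - c) = ∫ x in Ioi (a - c), f x := by
  have := (measurePreserving_sub_right volume c).setIntegral_preimage_emb
    (MeasurableEquiv.subRight c).measurableEmbedding f (Ioi (a - c))
  simpa using this

theorem integrable_exp_neg_sq : Integrable fun w : ℝ => exp (-w ^ 2) := by
  simpa using integrable_exp_neg_mul_sq one_pos

theorem integrable_two_mul_mul_exp_neg_sq : Integrable fun w : ℝ => 2 * w * exp (-w ^ 2) := by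
  simpa [mul_assoc] using (integrable_mul_exp_neg_mul_sq one_pos).const_mul 2

theorem integral_Ioi_two_mul_mul_exp_neg_sq (a : ℝ) :
    ∫ w in Ioi a, 2 * w * exp (-w ^ 2) = exp (-a ^ 2) := by
  have hderiv (x : ℝ) : HasDerivAt (fun w => -exp (-w ^ 2)) (2 * x * exp (-x ^ 2)) x :=
    ((hasDerivAt_pow 2 x).fun_neg.exp.fun_neg).congr_deriv (by push_cast; ring)
  have hlim : Tendsto (fun w : ℝ => -exp (-w ^ 2)) atTop (𝓝 0) := by
    simpa using (tendsto_exp_atBot.comp (tendsto_neg_atTop_atBot.comp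
      (tendsto_pow_atTop two_ne_zero))).neg
  rw [integral_Ioi_of_hasDerivAt_of_tendsto (by fun_prop) (fun x _ => hderiv x)
    integrable_two_mul_mul_exp_neg_sq.integrableOn hlim]
  ring

theorem tendsto_erfc_atBot : Tendsto erfc atBot (𝓝 2) := by
  have hmono : Monotone fun x : ℝ => Ioi (-x) := fun x y h => Ioi_subset_Ioi (neg_le_neg h)
  have hunion : (⋃ x : ℝ, Ioi (-x)) = univ := by
    refine eq_univ_of_forall fun u => mem_iUnion.2 ⟨-u + 1, ?_⟩
    simp
  have h := tendsto_setIntegral_of_monotone (fun x => measurableSet_Ioi) hmono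
    integrable_exp_neg_sq.integrableOn
  rw [hunion, setIntegral_univ] at h
  have htot : ∫ u : ℝ, exp (-u ^ 2) = √π := by simpa using integral_gaussian 1
  have := (h.comp tendsto_neg_atBot_atTop).const_mul (2 / √π)
  rw [htot, div_mul_cancel₀ _ (by positivity)] at this
  refine this.congr fun x => ?_
  simp [erfc]

noncomputable def jhatDenom (z : ℝ) : ℝ := 1 + √π * z * exp (z ^ 2) * erfc (-z)

theorem Jhat_eq (z : ℝ) : Jhat z = √(1 / jhatDenom z * (1 / jhatDenom z + 2)) := rfl

theorem two_mul_mul_exp_two_mul_sub_sq_eq (z v : ℝ) :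
    2 * v * exp (2 * z * v - v ^ 2)
      = exp (z ^ 2) * (2 * (v - z) * exp (-(v - z) ^ 2) + 2 * z * exp (-(v - z) ^ 2)) := by
  rw [show 2 * z * v - v ^ 2 = z ^ 2 + -(v - z) ^ 2 by ring, exp_add]
  ring

theorem integrable_two_mul_mul_exp_two_mul_sub_sq (z : ℝ) :
    Integrable fun v : ℝ => 2 * v * exp (2 * z * v - v ^ 2) := by
  have h := ((integrable_two_mul_mul_exp_neg_sq.add
    (integrable_exp_neg_sq.const_mul (2 * z))).const_mul (exp (z ^ 2))).comp_sub_right z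
  exact h.congr (ae_of_all _ fun v => (two_mul_mul_exp_two_mul_sub_sq_eq z v).symm)

theorem jhatDenom_eq_integral (z : ℝ) :
    jhatDenom z = ∫ v in Ioi 0, 2 * v * exp (2 * z * v - v ^ 2) := by
  simp_rw [two_mul_mul_exp_two_mul_sub_sq_eq z]
  rw [integral_Ioi_comp_sub_right
    (fun w => exp (z ^ 2) * (2 * w * exp (-w ^ 2) + 2 * z * exp (-w ^ 2))), integral_const_mul,
    integral_add integrable_two_mul_mul_exp_neg_sq.integrableOn
      (integrable_exp_neg_sq.const_mul _).integrableOn,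
    integral_Ioi_two_mul_mul_exp_neg_sq, integral_const_mul, mul_add, ← exp_add, zero_sub,
    jhatDenom, erfc]
  field_simp
  simp

theorem jhatDenom_pos (z : ℝ) : 0 < jhatDenom z := by
  rw [jhatDenom_eq_integral]
  exact setIntegral_pos_of_forall_pos measurableSet_Ioi (by simp)
    (fun v (hv : 0 < v) => by positivity) (integrable_two_mul_mul_exp_two_mul_sub_sq z).integrableOn

theorem jhatDenom_strictMono : StrictMono jhatDenom := by
  intro a b hab
  rw [← sub_pos, jhatDenom_eq_integral, jhatDenom_eq_integral,
    ← integral_sub (integrable_two_mul_mul_exp_two_mul_sub_sq b).integrableOn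
      (integrable_two_mul_mul_exp_two_mul_sub_sq a).integrableOn]
  refine setIntegral_pos_of_forall_pos measurableSet_Ioi (by simp) (fun v (hv : 0 < v) => ?_)
    ((integrable_two_mul_mul_exp_two_mul_sub_sq b).sub
      (integrable_two_mul_mul_exp_two_mul_sub_sq a)).integrableOn
  have : exp (2 * a * v - v ^ 2) < exp (2 * b * v - v ^ 2) := exp_lt_exp.2 (by nlinarith)
  nlinarith

theorem integrableOn_mul_exp_neg : IntegrableOn (fun t : ℝ => t * exp (-t)) (Ioi 0) :=
  (GammaIntegral_convergent two_pos).congr_fun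
    (fun t _ => by norm_num [mul_comm]) measurableSet_Ioi

theorem integral_Ioi_mul_exp_neg : ∫ t in Ioi (0 : ℝ), t * exp (-t) = 1 := by
  rw [← Gamma_two, Gamma_eq_integral two_pos]
  refine setIntegral_congr_fun measurableSet_Ioi fun t _ => ?_
  norm_num [mul_comm]

theorem tendsto_integral_mul_exp_neg_mul_exp_neg_mul_sq :
    Tendsto (fun ε : ℝ => ∫ t in Ioi 0, t * exp (-t) * exp (-ε * t ^ 2)) (𝓝[≥] 0) (𝓝 1) := by
  rw [← integral_Ioi_mul_exp_neg]
  refine tendsto_integral_filter_of_dominated_convergence _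
    (Eventually.of_forall fun ε => (by fun_prop : Continuous _).aestronglyMeasurable) ?_
    integrableOn_mul_exp_neg ?_
  · filter_upwards [self_mem_nhdsWithin] with ε (hε : 0 ≤ ε)
    filter_upwards [ae_restrict_mem measurableSet_Ioi] with t (ht : 0 < t)
    have : exp (-ε * t ^ 2) ≤ 1 := exp_le_one_iff.2 (by nlinarith)
    rw [norm_of_nonneg (by positivity)]
    exact mul_le_of_le_one_right (by positivity) this
  · refine ae_of_all _ fun t => ?_
    have : Continuous fun ε : ℝ => t * exp (-t) * exp (-ε * t ^ 2) := by fun_prop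
    simpa using (this.tendsto 0).mono_left nhdsWithin_le_nhds

theorem two_mul_sq_mul_jhatDenom_eq {z : ℝ} (hz : z < 0) :
    2 * z ^ 2 * jhatDenom z
      = ∫ t in Ioi 0, t * exp (-t) * exp (-(4 * z ^ 2)⁻¹ * t ^ 2) := by
  have hb : 0 < -2 * z := by linarith
  have hz0 : z ≠ 0 := hz.ne
  have h := integral_comp_mul_left_Ioi'
    (fun t => t * exp (-t) * exp (-(4 * z ^ 2)⁻¹ * t ^ 2)) 0 hb
  rw [mul_zero, smul_eq_mul] at h
  rw [← h, jhatDenom_eq_integral, ← integral_const_mul, ← integral_const_mul]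
  refine setIntegral_congr_fun measurableSet_Ioi fun v _ => ?_
  rw [mul_assoc _ (exp _), ← exp_add,
    show -(-2 * z * v) + -(4 * z ^ 2)⁻¹ * (-2 * z * v) ^ 2 = 2 * z * v - v ^ 2 by
      field_simp; ring]
  ring

theorem tendsto_sq_atBot_atTop : Tendsto (fun z : ℝ => z ^ 2) atBot atTop := by
  simpa [sq] using tendsto_id.atBot_mul_atBot₀ tendsto_id

theorem tendsto_two_mul_sq_mul_jhatDenom_atBot :
    Tendsto (fun z => 2 * z ^ 2 * jhatDenom z) atBot (𝓝 1) := by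
  have hε : Tendsto (fun z : ℝ => (4 * z ^ 2)⁻¹) atBot (𝓝[≥] 0) :=
    tendsto_nhdsWithin_iff.2 ⟨tendsto_inv_atTop_zero.comp
      (tendsto_sq_atBot_atTop.const_mul_atTop four_pos),
      Eventually.of_forall fun z => mem_Ici.2 (by positivity)⟩
  refine (tendsto_integral_mul_exp_neg_mul_exp_neg_mul_sq.comp hε).congr' ?_
  filter_upwards [eventually_lt_atBot 0] with z hz
  exact (two_mul_sq_mul_jhatDenom_eq hz).symm

theorem tendsto_sqrt_pi_mul_mul_exp_sq_atTop :
    Tendsto (fun z => √π * z * exp (z ^ 2)) atTop atTop :=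
  (tendsto_id.const_mul_atTop (by positivity)).atTop_mul_atTop₀
    (tendsto_exp_atTop.comp (tendsto_pow_atTop two_ne_zero))

theorem tendsto_jhatDenom_div_atTop :
    Tendsto (fun z => jhatDenom z / (√π * z * exp (z ^ 2))) atTop (𝓝 2) := by
  have h := (tendsto_inv_atTop_zero.comp tendsto_sqrt_pi_mul_mul_exp_sq_atTop).add
    (tendsto_erfc_atBot.comp tendsto_neg_atTop_atBot)
  rw [zero_add] at h
  refine h.congr' ?_
  filter_upwards [eventually_gt_atTop 0] with z hz
  simp only [Function.comp_apply, jhatDenom]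
  field_simp

theorem Jhat_pos (z : ℝ) : 0 < Jhat z := by
  have := jhatDenom_pos z
  rw [Jhat_eq]
  positivity

theorem Jhat_strictAnti : StrictAnti Jhat := by
  intro a b hab
  have hu : 1 / jhatDenom b < 1 / jhatDenom a :=
    one_div_lt_one_div_of_lt (jhatDenom_pos a) (jhatDenom_strictMono hab)
  have := jhatDenom_pos b
  rw [Jhat_eq, Jhat_eq]
  gcongr

theorem tendsto_Jhat_div_atBot : Tendsto (fun z => Jhat z / (2 * z ^ 2)) atBot (𝓝 1) := by
  have hq : Tendsto (fun z => (2 * z ^ 2 * jhatDenom z)⁻¹) atBot (𝓝 1) := by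
    simpa using tendsto_two_mul_sq_mul_jhatDenom_atBot.inv₀ one_ne_zero
  have hinv := tendsto_inv_atTop_zero.comp tendsto_sq_atBot_atTop
  have h := (hq.mul (hq.add hinv)).sqrt
  rw [add_zero, mul_one, sqrt_one] at h
  refine h.congr' ?_
  filter_upwards [eventually_ne_atBot 0] with z hz
  have := jhatDenom_pos z
  rw [Jhat_eq]
  conv_rhs => rw [← sqrt_sq (by positivity : 0 ≤ 2 * z ^ 2), ← sqrt_div' _ (by positivity)]
  congr 1
  simp only [Function.comp_apply]
  field_simp

theorem tendsto_Jhat_mul_atTop :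
    Tendsto (fun z => Jhat z * √(√π * z * exp (z ^ 2))) atTop (𝓝 1) := by
  have hA := tendsto_sqrt_pi_mul_mul_exp_sq_atTop
  have hr : Tendsto (fun z => √π * z * exp (z ^ 2) / jhatDenom z) atTop (𝓝 (1 / 2)) := by
    simpa using tendsto_jhatDenom_div_atTop.inv₀ two_ne_zero
  have hu : Tendsto (fun z => 1 / jhatDenom z) atTop (𝓝 0) := by
    have := hr.mul (tendsto_inv_atTop_zero.comp hA)
    rw [mul_zero] at this
    refine this.congr' ?_
    filter_upwards [eventually_gt_atTop 0] with z hz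
    have := jhatDenom_pos z
    simp only [Function.comp_apply]
    field_simp
  have h := (hr.mul (hu.add_const 2)).sqrt
  rw [zero_add, one_div_mul_cancel two_ne_zero, sqrt_one] at h
  refine h.congr' ?_
  filter_upwards [eventually_gt_atTop 0] with z hz
  have := jhatDenom_pos z
  rw [Jhat_eq, ← sqrt_mul (by positivity)]
  congr 1
  field_simp

theorem stmt_19 :
    (∀ z : ℝ, 0 < Jhat z)
    ∧ StrictAnti Jhat
    ∧ Tendsto (fun z => Jhat z / (2 * z^2)) atBot (nhds 1)
    ∧ Tendsto (fun z => Jhat z * Real.sqrt (Real.sqrt Real.pi * z * Real.exp (z^2))) atTop (nhds 1) :=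
  ⟨Jhat_pos, Jhat_strictAnti, tendsto_Jhat_div_atBot, tendsto_Jhat_mul_atTop⟩
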